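/- Let k ≥ 1 and c₁,…,c_{k-1} ∈ ℝ. Then sup over all choices of β₁,…,β_{k-1} ∈ [0,1] of (1/N²) log ∫₀^∞ exp(−(ρ^k + β_{k-1}c_{k-1}ρ^{k-1} + ⋯ + β₁c₁ρ)) ρ^N dρ tends to 0 as N → ∞. -/

import Mathlib

/-!
Absorbing the lower-order terms into half of the leading one shows that, uniformly in
`β ∈ [0,1]^ℕ`, the potential `V_β ρ = ρ^k + ∑ β_i c_i ρ^i` is at least `ρ/2 - a` on `(0, ∞)` and
at most `b` on `(1, 2]`. The second bound gives `Γ_N ≥ e^{-b}`; the first, together with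
`ρ^N ≤ 4^N N! e^{ρ/4}`, gives `Γ_N ≤ 4^{N+1} N! e^a`. Hence `|log Γ_N| = O(N log N) = o(N²)`.
-/

open MeasureTheory Filter Real Set

open scoped Nat Topology

section Potential

variable {ρ : ℝ} {k : ℕ}

lemma pow_le_one_add_pow (hρ : 0 ≤ ρ) {i m : ℕ} (him : i ≤ m) : ρ ^ i ≤ 1 + ρ ^ m := by
  rcases le_total ρ 1 with h | h
  · linarith [pow_le_one₀ hρ h (n := i), pow_nonneg hρ m]
  · linarith [pow_le_pow_right₀ h him]

lemma sub_one_le_pow_succ (hρ : 0 ≤ ρ) : ρ - 1 ≤ ρ ^ (k + 1) := by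
  rcases le_total ρ 1 with h | h
  · linarith [pow_nonneg hρ (k + 1)]
  · have : ρ ≤ ρ ^ (k + 1) := le_self_pow₀ h k.succ_ne_zero
    linarith

lemma abs_sum_Ico_mul_pow_le {β c : ℕ → ℝ} (hβ : ∀ i, β i ∈ Icc (0 : ℝ) 1) (hρ : 0 ≤ ρ) :
    |∑ i ∈ Finset.Ico 1 (k + 1), β i * c i * ρ ^ i|
      ≤ (∑ i ∈ Finset.Ico 1 (k + 1), |c i|) * (1 + ρ ^ k) := by
  rw [Finset.sum_mul]
  refine (Finset.abs_sum_le_sum_abs _ _).trans (Finset.sum_le_sum fun i hi => ?_)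
  have hik : i ≤ k := Nat.lt_succ_iff.mp (Finset.mem_Ico.mp hi).2
  rw [abs_mul, abs_mul, abs_of_nonneg (hβ i).1, abs_of_nonneg (pow_nonneg hρ i)]
  calc β i * |c i| * ρ ^ i ≤ 1 * |c i| * (1 + ρ ^ k) := by
        gcongr
        exacts [(hβ i).2, pow_le_one_add_pow hρ hik]
    _ = |c i| * (1 + ρ ^ k) := by rw [one_mul]

/-- Young-type absorption of the lower-order terms into half of the leading one:
below `2M` the left side is at most `M (1 + (2M)^k)`, above it `M ρ^k ≤ ρ^(k+1) / 2`. -/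
lemma mul_one_add_pow_le {M : ℝ} (hM : 0 ≤ M) (hρ : 0 ≤ ρ) :
    M * (1 + ρ ^ k) ≤ M * (1 + (2 * M) ^ k) + ρ ^ (k + 1) / 2 := by
  have hρk : 0 ≤ ρ ^ k := pow_nonneg hρ k
  rw [pow_succ]
  rcases le_total ρ (2 * M) with h | h
  · have := mul_le_mul_of_nonneg_left (pow_le_pow_left₀ hρ h k) hM
    nlinarith
  · have : 0 ≤ M * (2 * M) ^ k := by positivity
    nlinarith

variable {β c : ℕ → ℝ} {M : ℝ} (hβ : ∀ i, β i ∈ Icc (0 : ℝ) 1)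
  (hM : ∑ i ∈ Finset.Ico 1 (k + 1), |c i| ≤ M) (hρ : 0 ≤ ρ)
include hβ hM hρ

lemma half_sub_le_pow_add_sum :
    ρ / 2 - (M * (1 + (2 * M) ^ k) + 1 / 2)
      ≤ ρ ^ (k + 1) + ∑ i ∈ Finset.Ico 1 (k + 1), β i * c i * ρ ^ i := by
  have hM0 : 0 ≤ M := (Finset.sum_nonneg fun i _ => abs_nonneg (c i)).trans hM
  have hsum := neg_le_of_abs_le (abs_sum_Ico_mul_pow_le (c := c) (k := k) hβ hρ)
  have : (∑ i ∈ Finset.Ico 1 (k + 1), |c i|) * (1 + ρ ^ k) ≤ M * (1 + ρ ^ k) := by gcongr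
  linarith [mul_one_add_pow_le (k := k) hM0 hρ, sub_one_le_pow_succ (k := k) hρ]

lemma pow_add_sum_le_of_le_two (hρ2 : ρ ≤ 2) :
    ρ ^ (k + 1) + ∑ i ∈ Finset.Ico 1 (k + 1), β i * c i * ρ ^ i
      ≤ 2 ^ (k + 1) + M * (1 + 2 ^ k) := by
  have hM0 : 0 ≤ M := (Finset.sum_nonneg fun i _ => abs_nonneg (c i)).trans hM
  have hsum := le_of_abs_le (abs_sum_Ico_mul_pow_le (c := c) (k := k) hβ hρ)
  have : (∑ i ∈ Finset.Ico 1 (k + 1), |c i|) * (1 + ρ ^ k) ≤ M * (1 + 2 ^ k) := by gcongr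
  linarith [pow_le_pow_left₀ hρ hρ2 (k + 1)]

end Potential

/-- The paper's `Γ_N` for the potential `V`. -/
noncomputable def momentIntegral (V : ℝ → ℝ) (N : ℕ) : ℝ := ∫ ρ in Ioi 0, exp (-V ρ) * ρ ^ N

section MomentIntegral

variable {V : ℝ → ℝ} {a b : ℝ}

lemma pow_le_four_pow_mul_factorial_mul_exp {ρ : ℝ} (hρ : 0 ≤ ρ) (N : ℕ) :
    ρ ^ N ≤ 4 ^ N * N ! * exp (ρ / 4) := by
  have h := pow_div_factorial_le_exp _ (div_nonneg hρ zero_le_four) N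
  rw [div_pow, div_div, div_le_iff₀ (by positivity)] at h
  linarith

lemma exp_neg_mul_pow_le {ρ v : ℝ} (hρ : 0 ≤ ρ) (hv : ρ / 2 - a ≤ v) (N : ℕ) :
    exp (-v) * ρ ^ N ≤ 4 ^ N * N ! * exp a * exp (-(1 / 4) * ρ) := by
  calc exp (-v) * ρ ^ N ≤ exp (a - ρ / 2) * (4 ^ N * N ! * exp (ρ / 4)) := by
        gcongr
        · linarith
        · exact pow_le_four_pow_mul_factorial_mul_exp hρ N
    _ = 4 ^ N * N ! * exp a * exp (-(1 / 4) * ρ) := by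
        rw [mul_left_comm, mul_assoc, ← exp_add, mul_assoc, ← exp_add]
        ring_nf

variable (hV : Measurable V) (hVa : ∀ ρ, 0 < ρ → ρ / 2 - a ≤ V ρ)
include hV hVa

lemma integrableOn_exp_neg_mul_pow (N : ℕ) :
    IntegrableOn (fun ρ => exp (-V ρ) * ρ ^ N) (Ioi 0) := by
  refine Integrable.mono' ((exp_neg_integrableOn_Ioi 0 (b := 1 / 4) (by norm_num)).const_mul
    (4 ^ N * N ! * exp a)) (by fun_prop) ?_
  refine (ae_restrict_iff' measurableSet_Ioi).mpr (ae_of_all _ fun ρ (hρ : 0 < ρ) => ?_)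
  rw [Real.norm_of_nonneg (by positivity)]
  exact exp_neg_mul_pow_le hρ.le (hVa ρ hρ) N

lemma momentIntegral_le (N : ℕ) : momentIntegral V N ≤ 4 ^ (N + 1) * N ! * exp a := by
  have hint := (exp_neg_integrableOn_Ioi 0 (b := 1 / 4) (by norm_num)).const_mul
    (4 ^ N * N ! * exp a)
  calc momentIntegral V N ≤ ∫ ρ in Ioi 0, 4 ^ N * N ! * exp a * exp (-(1 / 4) * ρ) :=
        setIntegral_mono_on (integrableOn_exp_neg_mul_pow hV hVa N) hint measurableSet_Ioi
          fun ρ hρ => exp_neg_mul_pow_le (le_of_lt hρ) (hVa ρ hρ) N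
    _ = 4 ^ (N + 1) * N ! * exp a := by
        rw [integral_const_mul, integral_exp_mul_Ioi (by norm_num)]
        norm_num
        ring

lemma exp_neg_le_momentIntegral (hVb : ∀ ρ ∈ Ioc (1 : ℝ) 2, V ρ ≤ b) (N : ℕ) :
    exp (-b) ≤ momentIntegral V N := by
  have hint := integrableOn_exp_neg_mul_pow hV hVa N
  calc exp (-b) = ∫ _ in Ioc (1 : ℝ) 2, exp (-b) := by norm_num
    _ ≤ ∫ ρ in Ioc (1 : ℝ) 2, exp (-V ρ) * ρ ^ N := by
        refine setIntegral_mono_on (integrableOn_const (by simp)) (hint.mono_set ?_)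
          measurableSet_Ioc fun ρ hρ => ?_
        · exact fun ρ hρ => zero_lt_one.trans hρ.1
        · calc exp (-b) = exp (-b) * 1 := (mul_one _).symm
            _ ≤ exp (-V ρ) * ρ ^ N := by
                gcongr
                · exact hVb ρ hρ
                · exact one_le_pow₀ hρ.1.le
    _ ≤ momentIntegral V N := by
        refine setIntegral_mono_set hint ?_ (ae_of_all _ fun ρ hρ => zero_lt_one.trans hρ.1)
        exact (ae_restrict_iff' measurableSet_Ioi).mpr
          (ae_of_all _ fun ρ (hρ : 0 < ρ) => by positivity)

lemma abs_log_momentIntegral_le (hVb : ∀ ρ ∈ Ioc (1 : ℝ) 2, V ρ ≤ b) (N : ℕ) :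
    |log (momentIntegral V N)| ≤ (N + 1) * (log 4 + |a| + |b|) + N * log N := by
  have hlow := exp_neg_le_momentIntegral hV hVa hVb N
  have hpos := (exp_pos _).trans_le hlow
  have hfact : log (N ! : ℝ) ≤ N * log N := by
    rw [← log_pow]
    exact log_le_log (by positivity) (by exact_mod_cast Nat.factorial_le_pow N)
  have hlog4 : 0 ≤ log 4 := log_nonneg (by norm_num)
  have hlogN : 0 ≤ N * log N := mul_nonneg N.cast_nonneg (log_natCast_nonneg N)
  have hN : (0 : ℝ) ≤ N := N.cast_nonneg
  have h4 := mul_nonneg hN hlog4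
  have ha := mul_nonneg hN (abs_nonneg a)
  have hb := mul_nonneg hN (abs_nonneg b)
  rw [abs_le]
  constructor
  · have := log_le_log (exp_pos _) hlow
    rw [log_exp] at this
    linarith [le_abs_self b, abs_nonneg a]
  · have := log_le_log hpos (momentIntegral_le hV hVa N)
    rw [log_mul (by positivity) (exp_pos _).ne', log_mul (by positivity) (by positivity),
      log_exp, log_pow] at this
    push_cast at this
    linarith [le_abs_self a, abs_nonneg b]

end MomentIntegral

lemma tendsto_mul_add_mul_log_div_sq (K : ℝ) :
    Tendsto (fun N : ℕ => ((N + 1) * K + N * log N) / (N : ℝ) ^ 2) atTop (𝓝 0) := by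
  have hN : Tendsto (fun N : ℕ => (N : ℝ)) atTop atTop := tendsto_natCast_atTop_atTop
  have hsum : Tendsto (fun N : ℕ => K / N + K / (N : ℝ) ^ 2 + log N / N) atTop (𝓝 0) := by
    simpa using ((tendsto_const_nhds.div_atTop hN).add
      (tendsto_const_nhds.div_atTop ((tendsto_pow_atTop two_ne_zero).comp hN))).add
      (isLittleO_log_id_atTop.tendsto_div_nhds_zero.comp hN)
  refine hsum.congr' ((eventually_gt_atTop 0).mono fun N hN => ?_)
  have : (N : ℝ) ≠ 0 := by positivity
  field_simp

/-- Lemma 2 of the paper: `sup_{β ∈ [0,1]^{k-1}} (1/N²) log Γ_N(β) → 0` as `N → ∞`,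
where `Γ_N(β) = ∫₀^∞ exp(−(ρ^k + ∑_{i=1}^{k-1} β_i c_i ρ^i)) ρ^N dρ`.
The uniform convergence is expressed in ε–N₀ form. -/
theorem stmt5 (k : ℕ) (hk : 1 ≤ k) (c : ℕ → ℝ) :
    ∀ ε : ℝ, 0 < ε → ∃ N₀ : ℕ, ∀ N : ℕ, N₀ ≤ N →
      ∀ β : ℕ → ℝ, (∀ i, β i ∈ Set.Icc (0:ℝ) 1) →
        |(1 / (N : ℝ) ^ 2) * Real.log (∫ ρ in Set.Ioi (0:ℝ),
            Real.exp (-(ρ ^ k + ∑ i ∈ Finset.Ico 1 k, β i * c i * ρ ^ i)) * ρ ^ N)| ≤ ε := by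
  intro ε hε
  obtain ⟨k, rfl⟩ : ∃ m, k = m + 1 := ⟨k - 1, by omega⟩
  set M := ∑ i ∈ Finset.Ico 1 (k + 1), |c i|
  set a := M * (1 + (2 * M) ^ k) + 1 / 2
  set b : ℝ := 2 ^ (k + 1) + M * (1 + 2 ^ k)
  obtain ⟨N₀, hN₀⟩ := eventually_atTop.mp
    (((tendsto_mul_add_mul_log_div_sq (log 4 + |a| + |b|)).eventually_lt_const hε).and
      (eventually_gt_atTop 0))
  refine ⟨N₀, fun N hN β hβ => ?_⟩
  obtain ⟨hsmall, hNpos⟩ := hN₀ N hN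
  have hlog := abs_log_momentIntegral_le
    (V := fun ρ => ρ ^ (k + 1) + ∑ i ∈ Finset.Ico 1 (k + 1), β i * c i * ρ ^ i) (by fun_prop)
    (fun ρ hρ => half_sub_le_pow_add_sum hβ le_rfl hρ.le)
    (fun ρ hρ => pow_add_sum_le_of_le_two hβ le_rfl (zero_le_one.trans hρ.1.le) hρ.2) N
  rw [abs_mul, abs_of_pos (by positivity), one_div_mul_eq_div]
  exact (div_le_div_of_nonneg_right hlog (by positivity)).trans hsmall.le
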